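/- Let (M⁴,J) be a compact complex surface with a free J-invariant abelian 𝔱-action with basis V₁, V₂ = JV₁, and g a 𝔱-invariant Hermitian metric with splitting ω = λ μ₁ ∧ μ₂ + ω̌ and dμᵢ = σᵢ ω̌. If λ, σ₁, σ₂ are all constant, then the Lee form θ = λ(σ₁ μ₂ − σ₂ μ₁) is closed and the Lee vector field θ^♯ is a linear combination with constant coefficients of V₁ and V₂ (hence holomorphic). -/

import Mathlib

open scoped TensorProduct
noncomputable section

/-- Differential `k`-forms on a manifold `M` with trivialized tangent bundle `V`. -/
abbrev Form (M V : Type*) [AddCommGroup V] [Module ℝ V] (k : ℕ) :=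
  M → V [⋀^Fin k]→ₗ[ℝ] ℝ

variable {M V : Type*} [AddCommGroup V] [Module ℝ V]

/-- Wedge product of alternating maps. -/
def wedgeAlt {p q : ℕ} (a : V [⋀^Fin p]→ₗ[ℝ] ℝ) (b : V [⋀^Fin q]→ₗ[ℝ] ℝ) :
    V [⋀^Fin (p + q)]→ₗ[ℝ] ℝ :=
  ((TensorProduct.lid ℝ ℝ).toLinearMap.compAlternatingMap (a.domCoprod b)).domDomCongr
    finSumFinEquiv

/-- Wedge product of forms. -/
def wedge {p q : ℕ} (a : Form M V p) (b : Form M V q) : Form M V (p + q) :=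
  fun x => wedgeAlt (a x) (b x)

/-- Wedge with a `1`-form on the left, reindexed to land in degree `k + 1`. -/
def wedge1 {k : ℕ} (a : Form M V 1) (b : Form M V k) : Form M V (k + 1) :=
  fun x => (wedgeAlt (a x) (b x)).domDomCongr (finCongr (Nat.add_comm 1 k))

/-- Multiplication of a form by a function. -/
def fsmul {k : ℕ} (f : M → ℝ) (a : Form M V k) : Form M V k := fun x => f x • a x

/-- Interior product of a vector field with a form. -/
def iotaF {k : ℕ} (X : M → V) (a : Form M V (k + 1)) : Form M V k :=
  fun x => (a x).curryLeft (X x)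

/-- Action of an almost complex structure on `k`-forms, with the convention
`(Jα)(v₁,…,v_k) = (-1)^k α(Jv₁,…,Jv_k)`. -/
def Jform (J : V →ₗ[ℝ] V) {k : ℕ} (a : Form M V k) : Form M V k :=
  fun x => ((-1 : ℝ) ^ k) • (a x).compLinearMap J

/-- Horizontality of a `k`-form with respect to a vector field. -/
def Horiz {k : ℕ} (X : M → V) (a : Form M V k) : Prop :=
  ∀ (x : M) (v : Fin k → V) (i : Fin k), v i = X x → a x v = 0

/-- An abstract exterior differential calculus on the forms of a manifold with
trivialized tangent bundle, together with Lie derivatives, satisfying the usual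
identities (Cartan's formula, `d ∘ d = 0`, Leibniz rules). -/
structure ExtDiff (M V : Type*) [AddCommGroup V] [Module ℝ V] where
  d : ∀ {k : ℕ}, Form M V k → Form M V (k + 1)
  d0 : (M → ℝ) → Form M V 1
  lie : (M → V) → ∀ {k : ℕ}, Form M V k → Form M V k
  d_add : ∀ {k : ℕ} (a b : Form M V k), d (a + b) = d a + d b
  d_smul : ∀ {k : ℕ} (c : ℝ) (a : Form M V k), d (c • a) = c • d a
  dd : ∀ {k : ℕ} (a : Form M V k), d (d a) = 0
  d0d : ∀ f : M → ℝ, d (d0 f) = 0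
  cartan : ∀ {k : ℕ} (X : M → V) (a : Form M V (k + 1)),
    lie X a = d (iotaF X a) + iotaF X (d a)
  leibniz11 : ∀ (a b : Form M V 1),
    d (wedge a b) = wedge (d a) b - wedge a (d b)
  leibniz12 : ∀ (a : Form M V 1) (b : Form M V 2),
    d (wedge a b) = wedge (d a) b - wedge a (d b)
  leibniz21 : ∀ (a : Form M V 2) (b : Form M V 1),
    d (wedge a b) = wedge (d a) b + wedge a (d b)
  leibniz22 : ∀ (a b : Form M V 2),
    d (wedge a b) = wedge (d a) b + wedge a (d b)
  leibniz_fsmul : ∀ {k : ℕ} (f : M → ℝ) (a : Form M V k),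
    d (fsmul f a) = wedge1 (d0 f) a + fsmul f (d a)

namespace ExtDiff

variable (D : ExtDiff M V)

theorem d_sub {k : ℕ} (a b : Form M V k) : D.d (a - b) = D.d a - D.d b := by
  rw [sub_eq_add_neg, ← neg_one_smul ℝ b, D.d_add, D.d_smul, sub_eq_add_neg]
  congr 1
  ext x v
  simp

theorem d_smul_sub_smul_eq_zero {k : ℕ} {μ₁ μ₂ : Form M V k} {ω : Form M V (k + 1)}
    {s1 s2 : ℝ} (hdμ₁ : D.d μ₁ = s1 • ω) (hdμ₂ : D.d μ₂ = s2 • ω) :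
    D.d (s1 • μ₂ - s2 • μ₁) = 0 := by
  rw [D.d_sub, D.d_smul, D.d_smul, hdμ₁, hdμ₂, smul_smul, smul_smul, mul_comm, sub_self]

end ExtDiff

namespace LinearMap.BilinForm.Nondegenerate

variable {R E : Type*} [CommRing R] [AddCommGroup E] [Module R E]
  {B : LinearMap.BilinForm R E}

theorem eq_of_apply_eq (hB : B.Nondegenerate) {u v : E} (h : ∀ w, B u w = B v w) : u = v :=
  LinearMap.ker_eq_bot.mp hB.ker_eq_bot (LinearMap.ext h)

theorem eq_linComb_of_apply_eq (hB : B.Nondegenerate) {v₁ v₂ t : E} {f₁ f₂ : E → R}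
    {lam s1 s2 : R} (hv₁ : ∀ w, B v₁ w = lam * f₁ w) (hv₂ : ∀ w, B v₂ w = lam * f₂ w)
    (ht : ∀ w, B t w = lam * (s1 * f₂ w - s2 * f₁ w)) :
    t = (-s2) • v₁ + s1 • v₂ :=
  hB.eq_of_apply_eq fun w => by
    rw [ht, LinearMap.map_add₂, LinearMap.map_smul₂, LinearMap.map_smul₂, hv₁, hv₂,
      smul_eq_mul, smul_eq_mul]
    ring

end LinearMap.BilinForm.Nondegenerate

theorem stmt15_general {M V : Type*}
    [AddCommGroup V] [Module ℝ V]
    (D : ExtDiff M V)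
    (V₁ V₂ : M → V)
    (Hol : (M → V) → Prop)
    (hHol1 : Hol V₁) (hHol2 : Hol V₂)
    (hHolspan : ∀ (a b : ℝ) (X Y : M → V), Hol X → Hol Y →
      Hol (fun x => a • X x + b • Y x))
    (μ₁ μ₂ : Form M V 1) (ω' : Form M V 2) (lam s1 s2 : ℝ)
    (hdμ₁ : D.d μ₁ = s1 • ω') (hdμ₂ : D.d μ₂ = s2 • ω')
    (g : M → LinearMap.BilinForm ℝ V)
    (hgnd : ∀ x, (g x).Nondegenerate)
    (hgV1 : ∀ x w, g x (V₁ x) w = lam * μ₁ x ![w])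
    (hgV2 : ∀ x w, g x (V₂ x) w = lam * μ₂ x ![w])
    (θ : Form M V 1)
    (hθ : θ = lam • (s1 • μ₂ - s2 • μ₁))
    (θs : M → V)
    (hsharp : ∀ x w, g x (θs x) w = θ x ![w]) :
    D.d θ = 0 ∧
      (∃ a b : ℝ, θs = fun x => a • V₁ x + b • V₂ x) ∧ Hol θs := by
  have hclosed : D.d θ = 0 := by
    rw [hθ, D.d_smul, D.d_smul_sub_smul_eq_zero hdμ₁ hdμ₂, smul_zero]
  have hθs : θs = fun x => (-s2) • V₁ x + s1 • V₂ x := by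
    funext x
    refine (hgnd x).eq_linComb_of_apply_eq (hgV1 x) (hgV2 x) fun w => ?_
    simp only [hsharp, hθ, Pi.smul_apply, Pi.sub_apply, AlternatingMap.smul_apply,
      AlternatingMap.sub_apply, smul_eq_mul]
  exact ⟨hclosed, ⟨-s2, s1, hθs⟩, hθs ▸ hHolspan (-s2) s1 V₁ V₂ hHol1 hHol2⟩

/-- On a compact complex surface with a free `J`-invariant abelian
`𝔱`-action (basis `V₁`, `V₂ = JV₁`) and `𝔱`-invariant Hermitian metric with
splitting `ω = λ μ₁ ∧ μ₂ + ω̌` and `dμᵢ = σᵢ ω̌`: if `λ, σ₁, σ₂` are all constant,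
then the Lee form `θ = λ(σ₁ μ₂ − σ₂ μ₁)` is closed, and the Lee vector field `θ♯`
is a constant-coefficient linear combination of `V₁` and `V₂`, hence holomorphic.
`Hol` is the (abstract) predicate of being a holomorphic vector field. -/
theorem stmt15 {M V : Type*} [TopologicalSpace M] [CompactSpace M]
    [AddCommGroup V] [Module ℝ V] [FiniteDimensional ℝ V]
    (h4 : Module.finrank ℝ V = 4)
    (J : V →ₗ[ℝ] V) (hJ : ∀ v, J (J v) = -v)
    (D : ExtDiff M V)
    (V₁ V₂ : M → V)
    (hfree : ∀ x, LinearIndependent ℝ ![V₁ x, V₂ x])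
    (hJV : ∀ x, J (V₁ x) = V₂ x)
    (Hol : (M → V) → Prop)
    (hHol1 : Hol V₁) (hHol2 : Hol V₂)
    (hHolspan : ∀ (a b : ℝ) (X Y : M → V), Hol X → Hol Y →
      Hol (fun x => a • X x + b • Y x))
    (μ₁ μ₂ : Form M V 1) (ω' : Form M V 2) (lam s1 s2 : ℝ) (hlam : 0 < lam)
    (hdual : ∀ x, μ₁ x ![V₁ x] = 1 ∧ μ₁ x ![V₂ x] = 0 ∧ μ₂ x ![V₁ x] = 0 ∧ μ₂ x ![V₂ x] = 1)
    (hdμ₁ : D.d μ₁ = s1 • ω') (hdμ₂ : D.d μ₂ = s2 • ω')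
    (g : M → LinearMap.BilinForm ℝ V)
    (hgnd : ∀ x, (g x).Nondegenerate)
    (hgV1 : ∀ x w, g x (V₁ x) w = lam * μ₁ x ![w])
    (hgV2 : ∀ x w, g x (V₂ x) w = lam * μ₂ x ![w])
    (θ : Form M V 1)
    (hθ : θ = lam • (s1 • μ₂ - s2 • μ₁))
    (θs : M → V)
    (hsharp : ∀ x w, g x (θs x) w = θ x ![w]) :
    D.d θ = 0 ∧
      (∃ a b : ℝ, θs = fun x => a • V₁ x + b • V₂ x) ∧ Hol θs :=
  stmt15_general D V₁ V₂ Hol hHol1 hHol2 hHolspan μ₁ μ₂ ω' lam s1 s2 hdμ₁ hdμ₂ g hgnd hgV1 hgV2 θ hθ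
    θs hsharp
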